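/- arXiv:1809.06520 — 5 statements merged into one kernel-verified Lean document; each statement's English description precedes it below -/
import Mathlib

section
/- Let w ≥ 2 be a natural number. There exists an integer m with 1 ≤ m < 2^w such that, if J is uniformly distributed on {0, 1, …, 2^w − 1} and Y = 1 + ⌊m·J/2^w⌋, then max_{1 ≤ k ≤ m} P(Y = k) = 2 · min_{1 ≤ k ≤ m} P(Y = k), and moreover the ratio 2 differs from 1 + m·2^{−w+1} by at most 2^{−w+1}. -/
/-- The probability that the multiply-and-floor method outputs `k`, when `J` is uniformly
distributed on `{0, 1, …, 2^w − 1}` and `Y = 1 + ⌊m·J/2^w⌋`: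
`P(Y = k) = #{j < 2^w | 1 + ⌊m·j/2^w⌋ = k} / 2^w`. -/
def floorMulProb (w m k : ℕ) : ℚ :=
  (((Finset.range (2 ^ w)).filter (fun j => 1 + m * j / 2 ^ w = k)).card : ℚ) / 2 ^ w

private lemma natDivEq (a n v : ℕ) (hn : 0 < n) : a / n = v ↔ v * n ≤ a ∧ a < (v+1) * n := by
  constructor
  · rintro rfl
    refine ⟨Nat.div_mul_le_self a n, ?_⟩
    have := Nat.div_add_mod a n
    have := Nat.mod_lt a hn
    nlinarith [Nat.div_mul_le_self a n]
  · rintro ⟨h1, h2⟩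
    exact Nat.div_eq_of_lt_le h1 h2

private lemma memFilterIff (m n k j : ℕ) (hn : 0 < n) (hk : 1 ≤ k) :
    (j ∈ (Finset.range n).filter (fun j => 1 + m * j / n = k)) ↔
      (j < n ∧ (k-1) * n ≤ m * j ∧ m * j < k * n) := by
  have hk' : k - 1 + 1 = k := by omega
  simp only [Finset.mem_filter, Finset.mem_range]
  constructor
  · rintro ⟨hj, hq⟩
    have hq' : m * j / n = k - 1 := by omega
    rw [natDivEq _ _ _ hn, hk'] at hq'
    exact ⟨hj, hq'⟩
  · rintro ⟨hj, h1, h2⟩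
    refine ⟨hj, ?_⟩
    have : m * j / n = k - 1 := by rw [natDivEq _ _ _ hn, hk']; exact ⟨h1, h2⟩
    omega

private lemma cardGeOne (m n k : ℕ) (hm : 3 ≤ m) (hn : n = 2 * m - 2)
    (hk1 : 1 ≤ k) (hkm : k ≤ m) :
    1 ≤ ((Finset.range n).filter (fun j => 1 + m * j / n = k)).card := by
  have hn0 : 0 < n := by omega
  rw [show (1:ℕ) ≤ _ ↔ 0 < _ from Iff.rfl, Finset.card_pos]
  set v := k - 1 with hv
  set q := (2 * v) / m with hq
  set r := (2 * v) % m with hr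
  have hd : m * q + r = 2 * v := Nat.div_add_mod _ _
  have hrm : r < m := Nat.mod_lt _ (by omega)
  have hqv : q ≤ 2 * v := Nat.div_le_self _ _
  refine ⟨2 * v - q, ?_⟩
  rw [memFilterIff m n k _ hn0 hk1]
  have hmj : m * (2 * v - q) = v * n + r := by
    have h1 : m * (2 * v - q) = m * (2 * v) - m * q := Nat.mul_sub m (2*v) q
    have h2 : m * q ≤ m * (2 * v) := Nat.mul_le_mul_left m hqv
    have h4 : m * (2 * v) = 2 * (v * m) := by ring
    have h6 : v ≤ v * m := Nat.le_mul_of_pos_right v (by omega)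
    have h7 : v * n = v * (2 * m) - v * 2 := by rw [hn, Nat.mul_sub]
    have h8 : v * (2 * m) = 2 * (v * m) := by ring
    omega
  refine ⟨?_, ?_, ?_⟩
  · -- 2 * v - q < n
    have : m * (2 * v - q) < m * n := by
      rw [hmj]
      have hvm : v + 1 ≤ m := by omega
      have h9 : (v + 1) * n ≤ m * n := Nat.mul_le_mul_right n hvm
      have h10 : (v + 1) * n = v * n + n := by ring
      omega
    exact lt_of_mul_lt_mul_left this (Nat.zero_le m)
  · rw [hmj, hv]; omega
  · rw [hmj]
    have hkn : k * n = v * n + n := by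
      have hkk : k = v + 1 := by omega
      rw [hkk]; ring
    omega

private lemma cardLeTwo (m n k : ℕ) (hm : 3 ≤ m) (hn : n = 2 * m - 2)
    (hk1 : 1 ≤ k) (hkm : k ≤ m) :
    ((Finset.range n).filter (fun j => 1 + m * j / n = k)).card ≤ 2 := by
  have hn0 : 0 < n := by omega
  by_contra h
  push_neg at h
  obtain ⟨a, b, c, ha, hb, hc, hab, hac, hbc⟩ := Finset.two_lt_card_iff.mp h
  rw [memFilterIff m n k _ hn0 hk1] at ha hb hc
  have key : ∀ x z : ℕ, ((k-1) * n ≤ m * x) → (m * z < k * n) → ¬ (x + 2 ≤ z) := by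
    intro x z hx hz hxz
    have h1 : m * (x + 2) ≤ m * z := Nat.mul_le_mul_left m hxz
    have h1' : m * (x + 2) = m * x + 2 * m := by ring
    have h2 : k * n = (k - 1) * n + n := by
      have hkk : k = (k - 1) + 1 := by omega
      calc k * n = ((k - 1) + 1) * n := by rw [← hkk]
        _ = (k - 1) * n + n := by ring
    omega
  have g1 := key a b ha.2.1 hb.2.2
  have g2 := key b a hb.2.1 ha.2.2
  have g3 := key a c ha.2.1 hc.2.2
  have g4 := key c a hc.2.1 ha.2.2
  have g5 := key b c hb.2.1 hc.2.2
  have g6 := key c b hc.2.1 hb.2.2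
  omega

private lemma cardOne (m n : ℕ) (hm : 3 ≤ m) (hn : n = 2 * m - 2) :
    ((Finset.range n).filter (fun j => 1 + m * j / n = 1)).card = 2 := by
  have hn0 : 0 < n := by omega
  have hset : ((Finset.range n).filter (fun j => 1 + m * j / n = 1)) = {0, 1} := by
    ext j
    rw [memFilterIff m n 1 j hn0 le_rfl]
    simp only [Finset.mem_insert, Finset.mem_singleton]
    constructor
    · rintro ⟨hj, h1, h2⟩
      by_contra hcon
      push_neg at hcon
      have hj2 : 2 ≤ j := by omega
      have : m * 2 ≤ m * j := Nat.mul_le_mul_left m hj2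
      omega
    · rintro (rfl | rfl) <;> simp <;> omega
  rw [hset, Finset.card_insert_of_notMem (by simp), Finset.card_singleton]

private lemma cardM (m n : ℕ) (hm : 3 ≤ m) (hn : n = 2 * m - 2) :
    ((Finset.range n).filter (fun j => 1 + m * j / n = m)).card = 1 := by
  have hn0 : 0 < n := by omega
  have hset : ((Finset.range n).filter (fun j => 1 + m * j / n = m)) = {n - 1} := by
    ext j
    rw [memFilterIff m n m j hn0 (by omega)]
    simp only [Finset.mem_singleton]
    constructor
    · rintro ⟨hj, h1, h2⟩
      by_contra hcon
      have hj2 : j ≤ n - 2 := by omega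
      have hle : m * j ≤ m * (n - 2) := Nat.mul_le_mul_left m hj2
      have he : m * (n - 2) + 2 * m = m * n := by
        rw [Nat.mul_sub]
        have := Nat.mul_le_mul_left m (show 2 ≤ n by omega)
        omega
      have he2 : (m - 1) * n + n = m * n := by
        rw [Nat.sub_mul]
        have : n ≤ m * n := Nat.le_mul_of_pos_left n (by omega)
        omega
      omega
    · rintro rfl
      have he : m * (n - 1) + m = m * n := by
        rw [Nat.mul_sub]
        have : m ≤ m * n := Nat.le_mul_of_pos_right m hn0
        omega
      have he2 : (m - 1) * n + n = m * n := by
        rw [Nat.sub_mul]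
        have : n ≤ m * n := Nat.le_mul_of_pos_left n (by omega)
        omega
      refine ⟨by omega, by omega, by omega⟩
  rw [hset, Finset.card_singleton]

/-- for `w ≥ 2` there is `1 ≤ m < 2^w` such that
`max_{1 ≤ k ≤ m} P(Y = k) = 2 · min_{1 ≤ k ≤ m} P(Y = k)`, and the ratio `2`
differs from `1 + m·2^{−w+1}` by at most `2^{−w+1}`. -/
theorem exists_m_ratio_two (w : ℕ) (hw : 2 ≤ w) :
    ∃ m : ℕ, ∃ hm : 1 ≤ m, m < 2 ^ w ∧
      (Finset.Icc 1 m).sup' (Finset.nonempty_Icc.mpr hm) (floorMulProb w m) =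
        2 * (Finset.Icc 1 m).inf' (Finset.nonempty_Icc.mpr hm) (floorMulProb w m) ∧
      |(2 : ℚ) - (1 + (m : ℚ) * (2 : ℚ) ^ (-(w : ℤ) + 1))| ≤ (2 : ℚ) ^ (-(w : ℤ) + 1) := by
  set m : ℕ := 2 ^ (w - 1) + 1 with hmdef
  have hpow : 2 ^ w = 2 * 2 ^ (w - 1) := by
    rw [← pow_succ']
    congr 1
    omega
  have hm3 : 3 ≤ m := by
    have : 2 ≤ 2 ^ (w - 1) := by
      calc 2 = 2 ^ 1 := rfl
      _ ≤ 2 ^ (w - 1) := Nat.pow_le_pow_right (by norm_num) (by omega)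
    omega
  have hn : 2 ^ w = 2 * m - 2 := by omega
  have hmlt : m < 2 ^ w := by omega
  have hm1 : 1 ≤ m := by omega
  refine ⟨m, hm1, hmlt, ?_, ?_⟩
  · -- sup' = 2 * inf'
    have hq0 : (0:ℚ) < 2 ^ w := by positivity
    have hub : ∀ k ∈ Finset.Icc 1 m, floorMulProb w m k ≤ 2 / 2 ^ w := by
      intro k hk
      rw [Finset.mem_Icc] at hk
      unfold floorMulProb
      have := cardLeTwo m (2^w) k hm3 hn hk.1 hk.2
      gcongr
      exact_mod_cast this
    have hlb : ∀ k ∈ Finset.Icc 1 m, 1 / 2 ^ w ≤ floorMulProb w m k := by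
      intro k hk
      rw [Finset.mem_Icc] at hk
      unfold floorMulProb
      have := cardGeOne m (2^w) k hm3 hn hk.1 hk.2
      gcongr
      exact_mod_cast this
    have h1mem : (1:ℕ) ∈ Finset.Icc 1 m := Finset.mem_Icc.mpr ⟨le_rfl, hm1⟩
    have hmmem : m ∈ Finset.Icc 1 m := Finset.mem_Icc.mpr ⟨hm1, le_rfl⟩
    have hp1 : floorMulProb w m 1 = 2 / 2 ^ w := by
      unfold floorMulProb
      rw [cardOne m (2^w) hm3 hn]
      norm_num
    have hpm : floorMulProb w m m = 1 / 2 ^ w := by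
      unfold floorMulProb
      rw [cardM m (2^w) hm3 hn]
      norm_num
    have hsup : (Finset.Icc 1 m).sup' (Finset.nonempty_Icc.mpr hm1) (floorMulProb w m)
        = 2 / 2 ^ w := by
      apply le_antisymm
      · exact Finset.sup'_le _ _ hub
      · rw [← hp1]
        exact Finset.le_sup' _ h1mem
    have hinf : (Finset.Icc 1 m).inf' (Finset.nonempty_Icc.mpr hm1) (floorMulProb w m)
        = 1 / 2 ^ w := by
      apply le_antisymm
      · rw [← hpm]
        exact Finset.inf'_le _ hmmem
      · exact Finset.le_inf' _ _ hlb
    rw [hsup, hinf]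
    ring
  · -- the error bound
    have hz : (2:ℚ) ^ (-(w:ℤ) + 1) = 2 / 2 ^ w := by
      rw [zpow_add₀ (by norm_num : (2:ℚ) ≠ 0), zpow_neg, zpow_natCast, zpow_one]
      ring
    have hcast : (m:ℚ) = 2 ^ (w - 1) + 1 := by
      rw [hmdef]
      push_cast
      ring
    have hpq : (2:ℚ) ^ w = 2 * 2 ^ (w - 1) := by
      exact_mod_cast congrArg (Nat.cast : ℕ → ℚ) hpow
    have hp0 : (0:ℚ) < 2 ^ (w - 1) := by positivity
    have key : (m:ℚ) * ((2:ℚ) ^ (-(w:ℤ) + 1)) = 1 + 2 / 2 ^ w := by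
      rw [hz, hcast, hpq]
      field_simp
    rw [key, hz]
    have h2q : (0:ℚ) < 2 / 2 ^ w := by positivity
    rw [show (2:ℚ) - (1 + (1 + 2 / 2 ^ w)) = -(2 / 2 ^ w) by ring, abs_neg,
      abs_of_nonneg (le_of_lt h2q)]
end

section
/- Let w and m be positive natural numbers with 1 ≤ m ≤ 2^w. For each k with 1 ≤ k ≤ m, the number of integers j with 0 ≤ j < 2^w and ⌊m·j/2^w⌋ = k − 1 equals ⌈k·2^w/m⌉ − ⌈(k−1)·2^w/m⌉. -/
/-! The fiber over `k` consists of the naturals `j` with `(k - 1)·2^w/m ≤ j < k·2^w/m`, an interval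
whose integer points are counted by the difference of the ceilings of its ends; `k ≤ m` keeps it
inside `[0, 2^w)`. -/

open Finset

theorem Nat.div_eq_iff_mul_le_and_lt_mul {n d q : ℕ} (hd : 0 < d) :
    n / d = q ↔ q * d ≤ n ∧ n < (q + 1) * d := by
  rw [← Nat.le_div_iff_mul_le hd, ← Nat.div_lt_iff_lt_mul hd]
  omega

theorem Nat.mul_div_eq_iff_div_le_and_lt_div {m d q j : ℕ} (hm : 0 < m) (hd : 0 < d) :
    m * j / d = q ↔ (q * d / m : ℚ) ≤ j ∧ (j : ℚ) < (q + 1) * d / m := by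
  have hm' : (0 : ℚ) < m := by exact_mod_cast hm
  rw [Nat.div_eq_iff_mul_le_and_lt_mul hd, div_le_iff₀ hm', lt_div_iff₀ hm', mul_comm (j : ℚ)]
  exact_mod_cast Iff.rfl

theorem Nat.filter_range_le_and_lt_eq_Ico_ceil {α : Type*} [Semiring α] [LinearOrder α]
    [IsStrictOrderedRing α] [FloorSemiring α] {x y : α} {N : ℕ} (hy : y ≤ N) :
    (range N).filter (fun j : ℕ => x ≤ j ∧ (j : α) < y) = Ico ⌈x⌉₊ ⌈y⌉₊ := by
  ext j
  simp only [mem_filter, mem_range, mem_Ico, Nat.ceil_le, Nat.lt_ceil]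
  exact ⟨And.right, fun h => ⟨by exact_mod_cast h.2.trans_le hy, h⟩⟩

theorem Nat.card_Ico_ceil_eq_ceil_sub_ceil {α : Type*} [Ring α] [LinearOrder α]
    [IsStrictOrderedRing α] [FloorRing α] {x y : α} (hx : 0 ≤ x) (hxy : x ≤ y) :
    ((Ico ⌈x⌉₊ ⌈y⌉₊).card : ℤ) = ⌈y⌉ - ⌈x⌉ := by
  rw [Nat.card_Ico, Nat.cast_sub (Nat.ceil_mono hxy), Int.natCast_ceil_eq_ceil hx,
    Int.natCast_ceil_eq_ceil (hx.trans hxy)]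

theorem floorMul_fiber_card_general (w m : ℕ) :
    ∀ k : ℕ, 1 ≤ k → k ≤ m →
      ((((Finset.range (2 ^ w)).filter (fun j => m * j / 2 ^ w = k - 1)).card : ℤ)
        = ⌈((k : ℚ) * 2 ^ w) / m⌉ - ⌈(((k : ℚ) - 1) * 2 ^ w) / m⌉) := by
  intro k hk1 hkm
  obtain ⟨q, rfl⟩ : ∃ q, k = q + 1 := ⟨k - 1, by omega⟩
  have hm : (0 : ℚ) < m := by exact_mod_cast (by omega : 0 < m)
  have hd : (0 : ℚ) < 2 ^ w := by positivity
  have hfiber : (range (2 ^ w)).filter (fun j => m * j / 2 ^ w = q + 1 - 1) =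
      (range (2 ^ w)).filter
        (fun j : ℕ => (q * 2 ^ w / m : ℚ) ≤ j ∧ (j : ℚ) < (q + 1) * 2 ^ w / m) := by
    refine filter_congr fun j _ => ?_
    rw [Nat.add_sub_cancel, Nat.mul_div_eq_iff_div_le_and_lt_div (by omega) (by positivity)]
    push_cast
    rfl
  have hend : ((q : ℚ) + 1) * 2 ^ w / m ≤ (2 ^ w : ℕ) := by
    rw [div_le_iff₀ hm]
    push_cast
    nlinarith [show ((q : ℚ) + 1) ≤ m by exact_mod_cast hkm]
  rw [hfiber, Nat.filter_range_le_and_lt_eq_Ico_ceil hend,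
    Nat.card_Ico_ceil_eq_ceil_sub_ceil (by positivity) (by gcongr; linarith)]
  push_cast
  ring_nf

/-- exact preimage counts for the multiply-and-floor method.
For `1 ≤ m ≤ 2^w` and `1 ≤ k ≤ m`, the number of integers `j` with `0 ≤ j < 2^w` and
`⌊m·j/2^w⌋ = k − 1` equals `⌈k·2^w/m⌉ − ⌈(k−1)·2^w/m⌉`. -/
theorem floorMul_fiber_card (w m : ℕ) (hw : 0 < w) (hm1 : 1 ≤ m) (hm2 : m ≤ 2 ^ w) :
    ∀ k : ℕ, 1 ≤ k → k ≤ m →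
      ((((Finset.range (2 ^ w)).filter (fun j => m * j / 2 ^ w = k - 1)).card : ℤ)
        = ⌈((k : ℚ) * 2 ^ w) / m⌉ - ⌈(((k : ℚ) - 1) * 2 ^ w) / m⌉) :=
  floorMul_fiber_card_general w m
end

section
/- Let w and m be positive natural numbers with 1 ≤ m ≤ 2^w. For each k with 1 ≤ k ≤ m, the number of integers j with 0 ≤ j < 2^w and ⌊m·j/2^w⌋ = k − 1 is equal to either ⌊2^w/m⌋ or ⌈2^w/m⌉. -/
/-!
The fiber of `t` is the set of `j` with `t·N ≤ m·j < (t+1)·N`, i.e. the integer interval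
`[⌈x⌉, ⌈x + y⌉)` with `x = t·N/m` and `y = N/m`. Its length `⌈x + y⌉ - ⌈x⌉` lies between `⌊y⌋` and
`⌈y⌉`, which differ by at most one.
-/

open Finset

theorem Int.ceil_add_sub_ceil_eq_floor_or_ceil {R : Type*} [Ring R] [LinearOrder R] [FloorRing R]
    [IsOrderedRing R] (x y : R) : ⌈x + y⌉ - ⌈x⌉ = ⌊y⌋ ∨ ⌈x + y⌉ - ⌈x⌉ = ⌈y⌉ := by
  have lower : ⌈x⌉ + ⌊y⌋ ≤ ⌈x + y⌉ := by
    rw [← Int.ceil_add_intCast]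
    exact Int.ceil_mono (add_le_add_right (Int.floor_le y) x)
  have upper := Int.ceil_add_le x y
  have := Int.floor_le_ceil y
  have := Int.ceil_le_floor_add_one y
  omega

theorem Nat.mul_div_eq_iff_ceil_le_and_lt_ceil {m N t j : ℕ} (hm : 0 < m) (hN : 0 < N) :
    m * j / N = t ↔ ⌈(t * N / m : ℚ)⌉₊ ≤ j ∧ j < ⌈((t + 1) * N / m : ℚ)⌉₊ := by
  have hm' : (0 : ℚ) < m := by exact_mod_cast hm
  rw [Nat.ceil_le, Nat.lt_ceil, div_le_iff₀ hm', lt_div_iff₀ hm', Nat.div_eq_iff hN]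
  norm_cast
  rw [Nat.mul_comm j m, Nat.succ_mul]
  omega

theorem Nat.filter_range_mul_div_eq {m N t : ℕ} (hN : 0 < N) (ht : t < m) :
    (range N).filter (fun j => m * j / N = t) = Ico ⌈(t * N / m : ℚ)⌉₊ ⌈((t + 1) * N / m : ℚ)⌉₊ := by
  have hm : 0 < m := by omega
  have ceil_le_N : ⌈((t + 1) * N / m : ℚ)⌉₊ ≤ N := by
    rw [Nat.ceil_le, div_le_iff₀ (by exact_mod_cast hm)]
    exact_mod_cast (Nat.mul_le_mul_right N ht).trans_eq (Nat.mul_comm m N)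
  ext j
  simp only [mem_filter, mem_range, mem_Ico, Nat.mul_div_eq_iff_ceil_le_and_lt_ceil hm hN]
  omega

theorem Nat.card_filter_range_mul_div_eq {m N t : ℕ} (hN : 0 < N) (ht : t < m) :
    (#((range N).filter (fun j => m * j / N = t)) : ℤ)
      = ⌈(t * N / m : ℚ) + N / m⌉ - ⌈(t * N / m : ℚ)⌉ := by
  have hx : (0 : ℚ) ≤ t * N / m := by positivity
  have hxy : (t * N / m : ℚ) + N / m = (t + 1) * N / m := by ring
  have hmono : ⌈(t * N / m : ℚ)⌉₊ ≤ ⌈((t + 1) * N / m : ℚ)⌉₊ :=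
    Nat.ceil_le_ceil (hxy ▸ le_add_of_nonneg_right (by positivity))
  rw [Nat.filter_range_mul_div_eq hN ht, Nat.card_Ico, Nat.cast_sub hmono, hxy,
    Int.natCast_ceil_eq_ceil hx, Int.natCast_ceil_eq_ceil (hxy ▸ by positivity)]

theorem floorMul_fiber_card_floor_or_ceil_general (w m : ℕ) :
    ∀ k : ℕ, 1 ≤ k → k ≤ m →
      ((((Finset.range (2 ^ w)).filter (fun j => m * j / 2 ^ w = k - 1)).card : ℤ)
          = ⌊((2 : ℚ) ^ w) / m⌋ ∨
        (((Finset.range (2 ^ w)).filter (fun j => m * j / 2 ^ w = k - 1)).card : ℤ)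
          = ⌈((2 : ℚ) ^ w) / m⌉) := by
  intro k hk1 hkm
  have hcast : (2 : ℚ) ^ w = ((2 ^ w : ℕ) : ℚ) := by push_cast; rfl
  rw [hcast, Nat.card_filter_range_mul_div_eq (Nat.two_pow_pos w) (by omega)]
  exact Int.ceil_add_sub_ceil_eq_floor_or_ceil _ _

/-- preimage counts for the multiply-and-floor method are near-uniform.
For `1 ≤ m ≤ 2^w` and `1 ≤ k ≤ m`, the number of integers `j` with `0 ≤ j < 2^w` and
`⌊m·j/2^w⌋ = k − 1` equals either `⌊2^w/m⌋` or `⌈2^w/m⌉`. -/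
theorem floorMul_fiber_card_floor_or_ceil (w m : ℕ) (hw : 0 < w) (hm1 : 1 ≤ m)
    (hm2 : m ≤ 2 ^ w) :
    ∀ k : ℕ, 1 ≤ k → k ≤ m →
      ((((Finset.range (2 ^ w)).filter (fun j => m * j / 2 ^ w = k - 1)).card : ℤ)
          = ⌊((2 : ℚ) ^ w) / m⌋ ∨
        (((Finset.range (2 ^ w)).filter (fun j => m * j / 2 ^ w = k - 1)).card : ℤ)
          = ⌈((2 : ℚ) ^ w) / m⌉) :=
  floorMul_fiber_card_floor_or_ceil_general w m
end

section
/- Let w and m be positive natural numbers with 1 ≤ m ≤ 2^w, and suppose m does not divide 2^w. If J is uniformly distributed on {0, 1, …, 2^w − 1} and Y = 1 + ⌊m·J/2^w⌋, then max_{1 ≤ k ≤ m} P(Y = k) = ⌈2^w/m⌉/2^w and min_{1 ≤ k ≤ m} P(Y = k) = ⌊2^w/m⌋/2^w; in particular both values ⌊2^w/m⌋/2^w and ⌈2^w/m⌉/2^w are attained as P(Y = k) for some k. -/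
/-!
The output `i + 1` is produced exactly by the `j < N = 2^w` with `i N ≤ m j < (i + 1) N`, an
interval of integers of length `⌈(i + 1) N / m⌉ - ⌈i N / m⌉`, which lies between `⌊N / m⌋` and
`⌈N / m⌉`. The output `1` attains `⌈N / m⌉`; since the `m` counts sum to `N < m (⌊N / m⌋ + 1)`,
some output attains `⌊N / m⌋`.
-/

open Finset

def floorMulFiber (N m i : ℕ) : Finset ℕ :=
  (range N).filter (fun j => m * j / N = i)

section Fiber

variable {N m : ℕ}

theorem mem_floorMulFiber (hN : 0 < N) {i j : ℕ} (hi : i < m) :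
    j ∈ floorMulFiber N m i ↔ i * N ≤ m * j ∧ m * j < (i + 1) * N := by
  rw [← Nat.le_div_iff_mul_le hN, ← Nat.div_lt_iff_lt_mul hN, Nat.lt_succ_iff,
    ← Nat.le_antisymm_iff, eq_comm, floorMulFiber, mem_filter, mem_range]
  refine ⟨And.right, fun h => ⟨Nat.lt_of_mul_lt_mul_left (a := m) ?_, h⟩⟩
  calc m * j < (i + 1) * N := (Nat.div_lt_iff_lt_mul hN).mp (h ▸ Nat.lt_succ_self i)
    _ ≤ m * N := Nat.mul_le_mul_right N hi

theorem floorMulFiber_eq_Ico (hN : 0 < N) {i : ℕ} (hi : i < m) :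
    floorMulFiber N m i = Ico ⌈(i * N / m : ℚ)⌉₊ ⌈(i * N / m + N / m : ℚ)⌉₊ := by
  have hm : (0 : ℚ) < m := by exact_mod_cast (Nat.zero_lt_of_lt hi)
  ext j
  rw [mem_floorMulFiber hN hi, mem_Ico, Nat.ceil_le, Nat.lt_ceil, div_le_iff₀ hm,
    ← add_div, lt_div_iff₀ hm, mul_comm (j : ℚ), add_one_mul]
  norm_cast

theorem card_floorMulFiber_zero (hN : 0 < N) (hm : 0 < m) :
    #(floorMulFiber N m 0) = ⌈(N / m : ℚ)⌉₊ := by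
  simp [floorMulFiber_eq_Ico hN hm]

theorem floor_le_card_floorMulFiber (hN : 0 < N) {i : ℕ} (hi : i < m) :
    ⌊(N / m : ℚ)⌋₊ ≤ #(floorMulFiber N m i) := by
  rw [floorMulFiber_eq_Ico hN hi, Nat.card_Ico,
    Nat.le_sub_iff_add_le' (Nat.ceil_mono (by simp; positivity)),
    ← Nat.ceil_add_natCast (by positivity)]
  exact Nat.ceil_mono (by gcongr; exact Nat.floor_le (by positivity))

theorem card_floorMulFiber_le_ceil (hN : 0 < N) {i : ℕ} (hi : i < m) :
    #(floorMulFiber N m i) ≤ ⌈(N / m : ℚ)⌉₊ := by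
  rw [floorMulFiber_eq_Ico hN hi, Nat.card_Ico, Nat.sub_le_iff_le_add']
  exact Nat.ceil_add_le _ _

theorem sum_card_floorMulFiber (hN : 0 < N) (hm : 0 < m) :
    ∑ i ∈ range m, #(floorMulFiber N m i) = N := by
  conv_rhs => rw [← card_range N]
  refine (card_eq_sum_card_fiberwise fun j hj => mem_range.mpr ?_).symm
  exact (Nat.div_lt_iff_lt_mul hN).mpr (Nat.mul_lt_mul_of_le_of_lt le_rfl (mem_range.mp hj) hm)

theorem exists_card_floorMulFiber_eq_floor (hN : 0 < N) (hm : 0 < m) :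
    ∃ i < m, #(floorMulFiber N m i) = ⌊(N / m : ℚ)⌋₊ := by
  by_contra! h
  have hlt : (N : ℚ) < m * (⌊(N / m : ℚ)⌋₊ + 1) := by
    rw [← div_lt_iff₀' (by positivity)]
    exact Nat.lt_floor_add_one _
  have hge : m * (⌊(N / m : ℚ)⌋₊ + 1) ≤ N := calc
    m * (⌊(N / m : ℚ)⌋₊ + 1) = ∑ _i ∈ range m, (⌊(N / m : ℚ)⌋₊ + 1) := by simp
    _ ≤ ∑ i ∈ range m, #(floorMulFiber N m i) := sum_le_sum fun i hi =>
      (floor_le_card_floorMulFiber hN (mem_range.mp hi)).lt_of_ne (h i (mem_range.mp hi)).symm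
        |>.succ_le
    _ = N := sum_card_floorMulFiber hN hm
  exact hlt.not_ge (by exact_mod_cast hge)

end Fiber

section Prob

variable {w m : ℕ}

theorem floorMulProb_succ (i : ℕ) :
    floorMulProb w m (i + 1) = #(floorMulFiber (2 ^ w) m i) / 2 ^ w := by
  simp only [floorMulProb, floorMulFiber, add_comm 1, Nat.add_right_cancel_iff]

theorem floorMulProb_mem_Icc {k : ℕ} (hk : k ∈ Icc 1 m) :
    floorMulProb w m k ∈
      Set.Icc ((⌊(2 : ℚ) ^ w / m⌋₊ : ℚ) / 2 ^ w) (⌈(2 : ℚ) ^ w / m⌉₊ / 2 ^ w) := by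
  obtain ⟨i, rfl⟩ : ∃ i, k = i + 1 := ⟨k - 1, by grind⟩
  have hi : i < m := by grind
  have hN : 0 < 2 ^ w := Nat.two_pow_pos w
  rw [floorMulProb_succ]
  constructor <;> gcongr
  · exact_mod_cast floor_le_card_floorMulFiber hN hi
  · exact_mod_cast card_floorMulFiber_le_ceil hN hi

theorem floorMulProb_one (hm : 0 < m) :
    floorMulProb w m 1 = ⌈(2 : ℚ) ^ w / m⌉₊ / 2 ^ w := by
  rw [← zero_add 1, floorMulProb_succ, card_floorMulFiber_zero (Nat.two_pow_pos w) hm]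
  norm_num

theorem exists_floorMulProb_eq_floor (hm : 0 < m) :
    ∃ k ∈ Icc 1 m, floorMulProb w m k = ⌊(2 : ℚ) ^ w / m⌋₊ / 2 ^ w := by
  obtain ⟨i, hi, hcard⟩ := exists_card_floorMulFiber_eq_floor (Nat.two_pow_pos w) hm
  refine ⟨i + 1, mem_Icc.mpr ⟨by omega, hi⟩, ?_⟩
  rw [floorMulProb_succ, hcard]
  norm_num

end Prob

theorem floorMul_max_min_prob_general (w m : ℕ) (hm1 : 1 ≤ m) :
    (Finset.Icc 1 m).sup' (Finset.nonempty_Icc.mpr hm1) (floorMulProb w m)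
        = (⌈((2 : ℚ) ^ w) / m⌉ : ℚ) / 2 ^ w ∧
      (Finset.Icc 1 m).inf' (Finset.nonempty_Icc.mpr hm1) (floorMulProb w m)
        = (⌊((2 : ℚ) ^ w) / m⌋ : ℚ) / 2 ^ w ∧
      (∃ k ∈ Finset.Icc 1 m, floorMulProb w m k = (⌈((2 : ℚ) ^ w) / m⌉ : ℚ) / 2 ^ w) ∧
      (∃ k ∈ Finset.Icc 1 m, floorMulProb w m k = (⌊((2 : ℚ) ^ w) / m⌋ : ℚ) / 2 ^ w) := by
  have hx : (0 : ℚ) ≤ 2 ^ w / m := by positivity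
  rw [← natCast_floor_eq_intCast_floor hx, ← natCast_ceil_eq_intCast_ceil hx]
  have h1 : 1 ∈ Icc 1 m := mem_Icc.mpr ⟨le_rfl, hm1⟩
  obtain ⟨k, hk, hmin⟩ := exists_floorMulProb_eq_floor (w := w) hm1
  refine ⟨?_, ?_, ⟨1, h1, floorMulProb_one hm1⟩, ⟨k, hk, hmin⟩⟩
  · exact le_antisymm (sup'_le _ _ fun k hk => (floorMulProb_mem_Icc hk).2)
      (floorMulProb_one hm1 ▸ le_sup' _ h1)
  · exact le_antisymm (hmin ▸ inf'_le _ hk)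
      (le_inf' _ _ fun k hk => (floorMulProb_mem_Icc hk).1)

/-- if `1 ≤ m ≤ 2^w` and `m` does not divide `2^w`, then
`max_{1 ≤ k ≤ m} P(Y = k) = ⌈2^w/m⌉/2^w`, `min_{1 ≤ k ≤ m} P(Y = k) = ⌊2^w/m⌋/2^w`,
and both values are attained. -/
theorem floorMul_max_min_prob (w m : ℕ) (hw : 0 < w) (hm1 : 1 ≤ m) (hm2 : m ≤ 2 ^ w)
    (hnd : ¬ m ∣ 2 ^ w) :
    (Finset.Icc 1 m).sup' (Finset.nonempty_Icc.mpr hm1) (floorMulProb w m)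
        = (⌈((2 : ℚ) ^ w) / m⌉ : ℚ) / 2 ^ w ∧
      (Finset.Icc 1 m).inf' (Finset.nonempty_Icc.mpr hm1) (floorMulProb w m)
        = (⌊((2 : ℚ) ^ w) / m⌋ : ℚ) / 2 ^ w ∧
      (∃ k ∈ Finset.Icc 1 m, floorMulProb w m k = (⌈((2 : ℚ) ^ w) / m⌉ : ℚ) / 2 ^ w) ∧
      (∃ k ∈ Finset.Icc 1 m, floorMulProb w m k = (⌊((2 : ℚ) ^ w) / m⌋ : ℚ) / 2 ^ w) :=
  floorMul_max_min_prob_general w m hm1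
end

section
/- Let w and m be positive natural numbers with 1 ≤ m ≤ 2^w, let J be uniformly distributed on {0, 1, …, 2^w − 1}, and let Y = 1 + ⌊m·J/2^w⌋. Then Y is uniformly distributed on {1, …, m} (i.e., P(Y = k) = 1/m for all 1 ≤ k ≤ m) if and only if m divides 2^w. -/
open Finset

lemma filter_range_mul_div_eq {m d i : ℕ} (hd : 0 < d) (hi : i < m) :
    {j ∈ range (m * d) | j / d = i} = Ico (i * d) ((i + 1) * d) := by
  have hblock : (i + 1) * d ≤ m * d := Nat.mul_le_mul_right d hi
  ext j
  simp only [mem_filter, mem_range, mem_Ico, Nat.div_eq_iff hd]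
  constructor
  · rintro ⟨-, hlo, hhi⟩
    exact ⟨hlo, by rw [add_mul]; omega⟩
  · rintro ⟨hlo, hhi⟩
    exact ⟨by omega, hlo, by rw [add_mul] at hhi; omega⟩

lemma card_filter_range_mul_div_eq {m d i : ℕ} (hi : i < m) :
    #{j ∈ range (m * d) | j / d = i} = d := by
  rcases d.eq_zero_or_pos with rfl | hd
  · simp
  rw [filter_range_mul_div_eq hd hi, Nat.card_Ico, add_mul, Nat.add_sub_cancel_left, one_mul]

lemma floorMulProb_eq_one_div_of_mul_eq {w m d k : ℕ} (hd : 2 ^ w = m * d)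
    (hk : k ∈ Icc 1 m) : floorMulProb w m k = 1 / m := by
  obtain ⟨hk1, hkm⟩ := mem_Icc.mp hk
  have hm : 0 < m := by omega
  have hd0 : d ≠ 0 := by
    rintro rfl
    simp at hd
  have hfiber :
      {j ∈ range (2 ^ w) | 1 + m * j / 2 ^ w = k} = {j ∈ range (m * d) | j / d = k - 1} := by
    rw [hd]
    exact filter_congr fun j _ => by rw [Nat.mul_div_mul_left j d hm]; omega
  rw [floorMulProb, hfiber, card_filter_range_mul_div_eq (show k - 1 < m by omega),
    show (2 : ℚ) ^ w = m * d by exact_mod_cast hd]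
  field_simp

lemma dvd_of_floorMulProb_eq_one_div {w m k : ℕ} (hm : m ≠ 0)
    (h : floorMulProb w m k = 1 / m) : m ∣ 2 ^ w := by
  unfold floorMulProb at h
  rw [div_eq_div_iff (by positivity) (by exact_mod_cast hm), one_mul] at h
  exact Dvd.intro_left _ (by exact_mod_cast h)

theorem floorMul_uniform_iff_dvd_general (w m : ℕ) (hm1 : 1 ≤ m) :
    (∀ k ∈ Finset.Icc 1 m, floorMulProb w m k = 1 / m) ↔ m ∣ 2 ^ w := by
  constructor
  · intro huniform
    exact dvd_of_floorMulProb_eq_one_div (by omega) (huniform 1 (by simp [hm1]))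
  · rintro ⟨d, hd⟩ k hk
    exact floorMulProb_eq_one_div_of_mul_eq hd hk

/-- for `1 ≤ m ≤ 2^w`, the output `Y = 1 + ⌊m·J/2^w⌋` of the
multiply-and-floor method is uniformly distributed on `{1, …, m}` (i.e. `P(Y = k) = 1/m`
for all `1 ≤ k ≤ m`) if and only if `m` divides `2^w`. -/
theorem floorMul_uniform_iff_dvd (w m : ℕ) (hw : 0 < w) (hm1 : 1 ≤ m) (hm2 : m ≤ 2 ^ w) :
    (∀ k ∈ Finset.Icc 1 m, floorMulProb w m k = 1 / m) ↔ m ∣ 2 ^ w :=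
  floorMul_uniform_iff_dvd_general w m hm1
end
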